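/- Let v1, v2, y be jointly distributed random variables and z1 satisfy I(y; z1 | v1, v2) = 0. Then I(y; z1) ≥ I(y; (v1, v2)) − I(v1; v2 | z1) − I(v1; y | v2) − I(v2; y | v1). -/

import Mathlib

/-!
Write `V = (v1, v2)`. By the chain rule, `I(y; z1) + I(y; V | z1) = I(y; V) + I(y; z1 | V)`,
so under the hypothesis the loss `I(y; V) - I(y; z1)` is
`I(y; V | z1) = I(y; v1 | z1) + I(y; v2 | v1, z1)`. Two applications of the chain rule to a
pair give `I(X; Y | W) ≤ I(X; Z | W) + I(X; Y | Z, W)` and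
`I(X; Y | Z, W) ≤ I(X; Y | W) + I(X; Z | Y, W)`; with them
`I(y; v2 | v1, z1) ≤ I(v2; y | v1) + I(y; z1 | V)` and
`I(v1; y | z1) ≤ I(v1; v2 | z1) + I(v1; y | v2) + I(y; z1 | V)`, and `I(y; z1 | V) = 0`.

The chain rule itself holds pointwise: `I(X; Y | Z)` is the `p`-expectation of
`log (P(x,y,z) P(z) / (P(x,z) P(y,z)))`, and at a point of positive mass every fiber through it
has positive mass, so the logarithms split. Nonnegativity comes from `log x ≥ 1 - 1/x`.
-/

open scoped BigOperators

/-- Conditional mutual information I(X;Y|Z) for a finite probability space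
given by a pmf `p` on `Ω`. -/
noncomputable def condMI {Ω A B C : Type} [Fintype Ω] [Fintype A] [Fintype B] [Fintype C]
    [DecidableEq A] [DecidableEq B] [DecidableEq C]
    (p : Ω → ℝ) (X : Ω → A) (Y : Ω → B) (Z : Ω → C) : ℝ :=
  ∑ a : A, ∑ b : B, ∑ c : C,
    (∑ ω : Ω, if X ω = a ∧ Y ω = b ∧ Z ω = c then p ω else 0) *
      Real.log
        ((∑ ω : Ω, if X ω = a ∧ Y ω = b ∧ Z ω = c then p ω else 0) *
            (∑ ω : Ω, if Z ω = c then p ω else 0) /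
          ((∑ ω : Ω, if X ω = a ∧ Z ω = c then p ω else 0) *
            (∑ ω : Ω, if Y ω = b ∧ Z ω = c then p ω else 0)))

/-- Mutual information I(X;Y) as conditional mutual information given a constant. -/
noncomputable def mi {Ω A B : Type} [Fintype Ω] [Fintype A] [Fintype B]
    [DecidableEq A] [DecidableEq B] (p : Ω → ℝ) (X : Ω → A) (Y : Ω → B) : ℝ :=
  condMI p X Y (fun _ => ())

section Prob

variable {Ω : Type} [Fintype Ω] (p : Ω → ℝ)

noncomputable def prob (E : Ω → Prop) [DecidablePred E] : ℝ :=
  ∑ ω, if E ω then p ω else 0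

variable {p}

lemma prob_congr {E F : Ω → Prop} [DecidablePred E] [DecidablePred F] (h : ∀ ω, E ω ↔ F ω) :
    prob p E = prob p F :=
  Finset.sum_congr rfl fun ω _ => if_congr (h ω) rfl rfl

lemma prob_nonneg (hp : ∀ ω, 0 ≤ p ω) (E : Ω → Prop) [DecidablePred E] : 0 ≤ prob p E :=
  Finset.sum_nonneg fun ω _ => ite_nonneg (hp ω) le_rfl

lemma prob_mono (hp : ∀ ω, 0 ≤ p ω) {E F : Ω → Prop} [DecidablePred E] [DecidablePred F]
    (h : ∀ ω, E ω → F ω) : prob p E ≤ prob p F :=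
  Finset.sum_le_sum fun ω _ => by
    by_cases hE : E ω
    · simp [hE, h ω hE]
    · simpa [hE] using ite_nonneg (hp ω) le_rfl

lemma le_prob (hp : ∀ ω, 0 ≤ p ω) {E : Ω → Prop} [DecidablePred E] {ω : Ω} (h : E ω) :
    p ω ≤ prob p E := by
  calc p ω = if E ω then p ω else 0 := (if_pos h).symm
    _ ≤ prob p E := Finset.single_le_sum (fun ω' _ => ite_nonneg (hp ω') le_rfl)
      (Finset.mem_univ ω)

lemma sum_prob_mul {α : Type} [Fintype α] [DecidableEq α] (f : Ω → α) (g : α → ℝ) :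
    ∑ a, prob p (fun ω => f ω = a) * g a = ∑ ω, p ω * g (f ω) := by
  simp only [prob, Finset.sum_mul, ite_mul, zero_mul]
  rw [Finset.sum_comm]
  simp

lemma sum_prob_and {α : Type} [Fintype α] [DecidableEq α] (f : Ω → α)
    (E : Ω → Prop) [DecidablePred E] :
    ∑ a, prob p (fun ω => f ω = a ∧ E ω) = prob p E := by
  simp only [prob]
  rw [Finset.sum_comm]
  refine Finset.sum_congr rfl fun ω _ => ?_
  by_cases hE : E ω <;> simp [hE]

end Prob

lemma sub_mul_div_le_mul_log {j u v w : ℝ} (hj : 0 ≤ j) (hju : j ≤ u) (hjv : j ≤ v)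
    (huw : u ≤ w) :
    j - u * v / w ≤ j * Real.log (j * w / (u * v)) := by
  rcases hj.eq_or_lt with rfl | hj
  · simp only [zero_sub, zero_mul, neg_nonpos]
    exact div_nonneg (mul_nonneg hju hjv) (hju.trans huw)
  have hu : 0 < u := hj.trans_le hju
  have hv : 0 < v := hj.trans_le hjv
  have hw : 0 < w := hu.trans_le huw
  calc j - u * v / w = j * (1 - (j * w / (u * v))⁻¹) := by field_simp
    _ ≤ j * Real.log (j * w / (u * v)) :=
      mul_le_mul_of_nonneg_left (Real.one_sub_inv_le_log_of_pos (by positivity)) hj.le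

lemma condMI_eq_sum_prob {Ω A B C : Type} [Fintype Ω] [Fintype A] [Fintype B] [Fintype C]
    [DecidableEq A] [DecidableEq B] [DecidableEq C] (p : Ω → ℝ)
    (X : Ω → A) (Y : Ω → B) (Z : Ω → C) :
    condMI p X Y Z = ∑ a, ∑ b, ∑ c,
      prob p (fun ω => X ω = a ∧ Y ω = b ∧ Z ω = c) *
        Real.log (prob p (fun ω => X ω = a ∧ Y ω = b ∧ Z ω = c) * prob p (fun ω => Z ω = c) /
          (prob p (fun ω => X ω = a ∧ Z ω = c) * prob p (fun ω => Y ω = b ∧ Z ω = c))) :=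
  rfl

lemma condMI_nonneg {Ω A B C : Type} [Fintype Ω] [Fintype A] [Fintype B] [Fintype C]
    [DecidableEq A] [DecidableEq B] [DecidableEq C] {p : Ω → ℝ} (hp : ∀ ω, 0 ≤ p ω)
    (X : Ω → A) (Y : Ω → B) (Z : Ω → C) : 0 ≤ condMI p X Y Z := by
  have hJ : ∑ a, ∑ b, ∑ c, prob p (fun ω => X ω = a ∧ Y ω = b ∧ Z ω = c) = ∑ ω, p ω := by
    simpa [Fintype.sum_prod_type] using sum_prob_mul (p := p) (fun ω => (X ω, Y ω, Z ω)) 1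
  have hUV : ∑ a, ∑ b, ∑ c, prob p (fun ω => X ω = a ∧ Z ω = c) *
      prob p (fun ω => Y ω = b ∧ Z ω = c) / prob p (fun ω => Z ω = c) = ∑ ω, p ω := by
    calc _ = ∑ c, (∑ a, prob p (fun ω => X ω = a ∧ Z ω = c)) *
          (∑ b, prob p (fun ω => Y ω = b ∧ Z ω = c)) / prob p (fun ω => Z ω = c) := by
          simp only [Finset.sum_mul_sum, Finset.sum_div]
          exact Finset.sum_comm_cycle
      _ = ∑ c, prob p (fun ω => Z ω = c) := by simp only [sum_prob_and, mul_self_div_self]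
      _ = ∑ ω, p ω := by simpa using sum_prob_mul (p := p) Z 1
  rw [condMI_eq_sum_prob]
  -- `log x ≥ 1 - 1/x` termwise; both halves of the resulting lower bound sum to the total mass.
  refine le_trans ?_ (Finset.sum_le_sum fun a _ => Finset.sum_le_sum fun b _ =>
    Finset.sum_le_sum fun c _ => sub_mul_div_le_mul_log (prob_nonneg hp _)
      (prob_mono hp fun ω h => ⟨h.1, h.2.2⟩) (prob_mono hp fun ω h => ⟨h.2.1, h.2.2⟩)
      (prob_mono hp fun ω h => h.2))
  simp only [Finset.sum_sub_distrib, hJ, hUV, sub_self, le_refl]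

section CondMI

variable {Ω A B C D : Type} [Fintype Ω] [DecidableEq A] [DecidableEq B] [DecidableEq C]
  [DecidableEq D] {p : Ω → ℝ}

variable (p) in
noncomputable def condPMI (X : Ω → A) (Y : Ω → B) (Z : Ω → C) (ω : Ω) : ℝ :=
  Real.log (prob p (fun ω' => X ω' = X ω ∧ Y ω' = Y ω ∧ Z ω' = Z ω) *
      prob p (fun ω' => Z ω' = Z ω) /
    (prob p (fun ω' => X ω' = X ω ∧ Z ω' = Z ω) * prob p (fun ω' => Y ω' = Y ω ∧ Z ω' = Z ω)))

lemma condPMI_comm (X : Ω → A) (Y : Ω → B) (Z : Ω → C) (ω : Ω) :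
    condPMI p X Y Z ω = condPMI p Y X Z ω := by
  simp only [condPMI]
  rw [prob_congr fun _ => and_left_comm, mul_comm (prob p fun ω' => X ω' = X ω ∧ _)]

lemma condPMI_comp_of_injective {B' C' : Type} [DecidableEq B'] [DecidableEq C']
    (X : Ω → A) (Y : Ω → B) (Z : Ω → C) {f : B → B'} {g : C → C'}
    (hf : f.Injective) (hg : g.Injective) (ω : Ω) :
    condPMI p X (f ∘ Y) (g ∘ Z) ω = condPMI p X Y Z ω := by
  simp only [condPMI, Function.comp, hf.eq_iff, hg.eq_iff]

lemma condPMI_chain (hp : ∀ ω, 0 ≤ p ω) (X : Ω → A) (Y : Ω → B) (Z : Ω → C) (W : Ω → D)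
    {ω : Ω} (hω : 0 < p ω) :
    condPMI p X (fun ω => (Y ω, Z ω)) W ω
      = condPMI p X Y W ω + condPMI p X Z (fun ω => (Y ω, W ω)) ω := by
  have pos {E : Ω → Prop} [DecidablePred E] (h : E ω) : 0 < prob p E :=
    hω.trans_le (le_prob hp h)
  simp only [condPMI, Prod.mk.injEq]
  rw [prob_congr (E := fun ω' => X ω' = X ω ∧ Z ω' = Z ω ∧ Y ω' = Y ω ∧ W ω' = W ω)
      (F := fun ω' => X ω' = X ω ∧ (Y ω' = Y ω ∧ Z ω' = Z ω) ∧ W ω' = W ω) fun _ => by tauto,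
    prob_congr (E := fun ω' => Z ω' = Z ω ∧ Y ω' = Y ω ∧ W ω' = W ω)
      (F := fun ω' => (Y ω' = Y ω ∧ Z ω' = Z ω) ∧ W ω' = W ω) fun _ => by tauto]
  have h1 := pos (E := fun ω' => X ω' = X ω ∧ (Y ω' = Y ω ∧ Z ω' = Z ω) ∧ W ω' = W ω)
    ⟨rfl, ⟨rfl, rfl⟩, rfl⟩
  have h2 := pos (E := fun ω' => (Y ω' = Y ω ∧ Z ω' = Z ω) ∧ W ω' = W ω) ⟨⟨rfl, rfl⟩, rfl⟩
  have h3 := pos (E := fun ω' => X ω' = X ω ∧ Y ω' = Y ω ∧ W ω' = W ω) ⟨rfl, rfl, rfl⟩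
  have h4 := pos (E := fun ω' => X ω' = X ω ∧ W ω' = W ω) ⟨rfl, rfl⟩
  have h5 := pos (E := fun ω' => Y ω' = Y ω ∧ W ω' = W ω) ⟨rfl, rfl⟩
  have h6 := pos (E := fun ω' => W ω' = W ω) rfl
  rw [← Real.log_mul (by positivity) (by positivity)]
  congr 1
  field_simp

variable [Fintype A] [Fintype B] [Fintype C] [Fintype D]

lemma condMI_eq_sum_condPMI (X : Ω → A) (Y : Ω → B) (Z : Ω → C) :
    condMI p X Y Z = ∑ ω, p ω * condPMI p X Y Z ω := by
  refine Eq.trans ?_ (sum_prob_mul (fun ω => (X ω, Y ω, Z ω))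
    (fun t => Real.log (prob p (fun ω' => X ω' = t.1 ∧ Y ω' = t.2.1 ∧ Z ω' = t.2.2) *
      prob p (fun ω' => Z ω' = t.2.2) / (prob p (fun ω' => X ω' = t.1 ∧ Z ω' = t.2.2) *
        prob p (fun ω' => Y ω' = t.2.1 ∧ Z ω' = t.2.2)))))
  simp only [Fintype.sum_prod_type, Prod.mk.injEq]
  rfl

lemma condMI_comm (X : Ω → A) (Y : Ω → B) (Z : Ω → C) :
    condMI p X Y Z = condMI p Y X Z := by
  simp only [condMI_eq_sum_condPMI, condPMI_comm X Y]

lemma condMI_comp_of_injective {B' C' : Type} [Fintype B'] [Fintype C'] [DecidableEq B']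
    [DecidableEq C'] (X : Ω → A) (Y : Ω → B) (Z : Ω → C) {f : B → B'} {g : C → C'}
    (hf : f.Injective) (hg : g.Injective) :
    condMI p X (f ∘ Y) (g ∘ Z) = condMI p X Y Z := by
  simp only [condMI_eq_sum_condPMI, condPMI_comp_of_injective X Y Z hf hg]

lemma condMI_cond_prod_comm (X : Ω → A) (Y : Ω → B) (Z : Ω → C) (W : Ω → D) :
    condMI p X Y (fun ω => (Z ω, W ω)) = condMI p X Y (fun ω => (W ω, Z ω)) :=
  (condMI_comp_of_injective X Y _ Function.injective_id Prod.swap_injective).symm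

lemma condMI_chain (hp : ∀ ω, 0 ≤ p ω) (X : Ω → A) (Y : Ω → B) (Z : Ω → C) (W : Ω → D) :
    condMI p X (fun ω => (Y ω, Z ω)) W
      = condMI p X Y W + condMI p X Z (fun ω => (Y ω, W ω)) := by
  simp only [condMI_eq_sum_condPMI, ← Finset.sum_add_distrib, ← mul_add]
  refine Finset.sum_congr rfl fun ω _ => ?_
  rcases (hp ω).eq_or_lt with h | h
  · simp [← h]
  · rw [condPMI_chain hp X Y Z W h]

lemma mi_prod (hp : ∀ ω, 0 ≤ p ω) (X : Ω → A) (Y : Ω → B) (Z : Ω → C) :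
    mi p X (fun ω => (Y ω, Z ω)) = mi p X Y + condMI p X Z Y := by
  rw [mi, mi, condMI_chain hp]
  congr 1
  exact condMI_comp_of_injective (f := id) (g := fun b => (b, ())) X Z Y Function.injective_id
    fun _ _ h => congrArg Prod.fst h

lemma mi_add_condMI_comm (hp : ∀ ω, 0 ≤ p ω) (X : Ω → A) (Y : Ω → B) (Z : Ω → C) :
    mi p X Y + condMI p X Z Y = mi p X Z + condMI p X Y Z := by
  rw [← mi_prod hp, ← mi_prod hp]
  exact (condMI_comp_of_injective X _ _ Prod.swap_injective Function.injective_id).symm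

lemma condMI_add_condMI_comm (hp : ∀ ω, 0 ≤ p ω) (X : Ω → A) (Y : Ω → B) (Z : Ω → C)
    (W : Ω → D) :
    condMI p X Y W + condMI p X Z (fun ω => (Y ω, W ω))
      = condMI p X Z W + condMI p X Y (fun ω => (Z ω, W ω)) := by
  rw [← condMI_chain hp, ← condMI_chain hp]
  exact (condMI_comp_of_injective X _ W Prod.swap_injective Function.injective_id).symm

lemma condMI_le_add_condMI (hp : ∀ ω, 0 ≤ p ω) (X : Ω → A) (Y : Ω → B) (Z : Ω → C)
    (W : Ω → D) :
    condMI p X Y W ≤ condMI p X Z W + condMI p X Y (fun ω => (Z ω, W ω)) := by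
  rw [← condMI_add_condMI_comm hp]
  exact le_add_of_nonneg_right (condMI_nonneg hp _ _ _)

lemma condMI_cond_le_add_condMI (hp : ∀ ω, 0 ≤ p ω) (X : Ω → A) (Y : Ω → B) (Z : Ω → C)
    (W : Ω → D) :
    condMI p X Y (fun ω => (Z ω, W ω)) ≤ condMI p X Y W + condMI p X Z (fun ω => (Y ω, W ω)) := by
  rw [condMI_add_condMI_comm hp]
  exact le_add_of_nonneg_left (condMI_nonneg hp _ _ _)

end CondMI

theorem stmt2_general {Ω A B C D : Type} [Fintype Ω] [Fintype A] [Fintype B] [Fintype C] [Fintype D]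
    [DecidableEq A] [DecidableEq B] [DecidableEq C] [DecidableEq D]
    (p : Ω → ℝ) (hp : ∀ ω, 0 ≤ p ω)
    (v1 : Ω → A) (v2 : Ω → B) (y : Ω → C) (z1 : Ω → D)
    (hrep : condMI p y z1 (fun ω => (v1 ω, v2 ω)) = 0) :
    mi p y z1 ≥ mi p y (fun ω => (v1 ω, v2 ω))
      - condMI p v1 v2 z1 - condMI p v1 y v2 - condMI p v2 y v1 := by
  have h_mi : mi p y z1 + condMI p y (fun ω => (v1 ω, v2 ω)) z1
      = mi p y (fun ω => (v1 ω, v2 ω)) + condMI p y z1 (fun ω => (v1 ω, v2 ω)) :=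
    mi_add_condMI_comm hp y z1 _
  have h_chain : condMI p y (fun ω => (v1 ω, v2 ω)) z1
      = condMI p v1 y z1 + condMI p y v2 (fun ω => (v1 ω, z1 ω)) := by
    rw [condMI_chain hp, condMI_comm y v1 z1]
  have h_v2 : condMI p y v2 (fun ω => (v1 ω, z1 ω))
      ≤ condMI p v2 y v1 + condMI p y z1 (fun ω => (v1 ω, v2 ω)) := by
    rw [condMI_cond_prod_comm y v2 v1 z1, condMI_comm v2 y v1, condMI_cond_prod_comm y z1 v1 v2]
    exact condMI_cond_le_add_condMI hp y v2 z1 v1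
  have h_v1 : condMI p v1 y z1 ≤ condMI p v1 v2 z1 + condMI p v1 y (fun ω => (v2 ω, z1 ω)) :=
    condMI_le_add_condMI hp v1 y v2 z1
  have h_v1' : condMI p v1 y (fun ω => (v2 ω, z1 ω))
      ≤ condMI p v1 y v2 + condMI p y z1 (fun ω => (v1 ω, v2 ω)) := by
    rw [condMI_comm v1 y, condMI_comm v1 y v2, condMI_cond_prod_comm y v1 v2 z1]
    exact condMI_cond_le_add_condMI hp y v1 z1 v2
  linarith

theorem stmt2 {Ω A B C D : Type} [Fintype Ω] [Fintype A] [Fintype B] [Fintype C] [Fintype D]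
    [DecidableEq A] [DecidableEq B] [DecidableEq C] [DecidableEq D]
    (p : Ω → ℝ) (hp : ∀ ω, 0 ≤ p ω) (hp1 : ∑ ω : Ω, p ω = 1)
    (v1 : Ω → A) (v2 : Ω → B) (y : Ω → C) (z1 : Ω → D)
    (hrep : condMI p y z1 (fun ω => (v1 ω, v2 ω)) = 0) :
    mi p y z1 ≥ mi p y (fun ω => (v1 ω, v2 ω))
      - condMI p v1 v2 z1 - condMI p v1 y v2 - condMI p v2 y v1 :=
  stmt2_general p hp v1 v2 y z1 hrep
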